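/- Let p, q ∈ ℂ with 0 < |p| < 1 and q ≠ 0, and let L = {pᵐ qⁿ : m, n ∈ ℤ}. Then for every x ∈ ℂ, x ≠ 0, with x ∉ L, one has the Riemann factorization S_TT(x) · S_TT(x q) = F₁(x)⁻¹ · F₁(x⁻¹ q⁻¹). (The left-hand side is the S-matrix function S_{T₁,T₂^q}(x) governing the exchange of the deformed Virasoro current T₁(z) with the fused current T₂^q(w); the factorization yields the quadratic-linear relation between their Fourier coefficients.) -/

import Mathlib

/-!
Writing `(y) = (y; p²)_∞`, one has `θ_{p²}(X) = (X) (p²/X) (p²)` and `(y) = (1 - y) (y p²)`.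
Peeling off finitely many factors this way shows `S_TT(x) = f(x⁻¹) / f(x)` and
`F₁(x) = f(x) f(x q)` for the structure function `f` of the deformed Virasoro algebra; the
factorization follows by multiplying the first identity at `x` and at `x q`. Off the lattice `L`
none of the products and linear factors one divides by vanishes.
-/

/-- The infinite product `(a; b)_∞ = ∏_{n ≥ 0} (1 - a bⁿ)`. -/
noncomputable def qPoch (a b : ℂ) : ℂ := ∏' n : ℕ, (1 - a * b ^ n)

/-- The structure function `f(x)` of the deformed Virasoro algebra (formula (6)):
`f(x) = (1-x)⁻¹ (xq; p²)_∞ (xpq⁻¹; p²)_∞ / ((xpq; p²)_∞ (xp²q⁻¹; p²)_∞)`. -/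
noncomputable def fDV (p q x : ℂ) : ℂ :=
  (1 - x)⁻¹ * (qPoch (x * q) (p ^ 2) * qPoch (x * p * q⁻¹) (p ^ 2)) /
    (qPoch (x * p * q) (p ^ 2) * qPoch (x * p ^ 2 * q⁻¹) (p ^ 2))

/-- `θ_a(x) = ∏_{n ≥ 1} (1 - x a^{n-1})(1 - x⁻¹ aⁿ)(1 - aⁿ)`. -/
noncomputable def theta (a x : ℂ) : ℂ :=
  ∏' n : ℕ, ((1 - x * a ^ n) * (1 - x⁻¹ * a ^ (n + 1)) * (1 - a ^ (n + 1)))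

/-- The S-matrix function of the deformed Virasoro algebra:
`S_TT(x) = θ_{p²}(xp) θ_{p²}(xq⁻¹) θ_{p²}(xp⁻¹q) / (θ_{p²}(xp⁻¹) θ_{p²}(xq) θ_{p²}(xpq⁻¹))`. -/
noncomputable def STT (p q x : ℂ) : ℂ :=
  theta (p ^ 2) (x * p) * theta (p ^ 2) (x * q⁻¹) * theta (p ^ 2) (x * p⁻¹ * q) /
    (theta (p ^ 2) (x * p⁻¹) * theta (p ^ 2) (x * q) * theta (p ^ 2) (x * p * q⁻¹))

/-- The structure function `F₁(x)` of the exchange relation between `T₁(z)` and `T₂^q(w)`: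
`F₁(x) = (xp;p²)_∞ (xp²q;p²)_∞ (xpq⁻¹;p²)_∞ (xq²;p²)_∞ /
  ((x;p²)_∞ (xpq;p²)_∞ (xp²q⁻¹;p²)_∞ (xpq²;p²)_∞)`. -/
noncomputable def F1 (p q x : ℂ) : ℂ :=
  qPoch (x * p) (p ^ 2) * qPoch (x * p ^ 2 * q) (p ^ 2) * qPoch (x * p * q⁻¹) (p ^ 2) *
      qPoch (x * q ^ 2) (p ^ 2) /
    (qPoch x (p ^ 2) * qPoch (x * p * q) (p ^ 2) * qPoch (x * p ^ 2 * q⁻¹) (p ^ 2) *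
      qPoch (x * p * q ^ 2) (p ^ 2))

section QPochhammer

variable {a : ℂ}

lemma summable_norm_neg_mul_pow (ha : ‖a‖ < 1) (y : ℂ) :
    Summable fun n : ℕ => ‖-(y * a ^ n)‖ := by
  simpa only [norm_neg, norm_mul, norm_pow] using
    (summable_geometric_of_lt_one (norm_nonneg a) ha).mul_left ‖y‖

lemma multipliable_one_sub_mul_pow (ha : ‖a‖ < 1) (y : ℂ) :
    Multipliable fun n : ℕ => 1 - y * a ^ n := by
  simpa only [← sub_eq_add_neg] using
    multipliable_one_add_of_summable (summable_norm_neg_mul_pow ha y)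

lemma qPoch_ne_zero (ha : ‖a‖ < 1) {y : ℂ} (hy : ∀ n : ℕ, y * a ^ n ≠ 1) :
    qPoch y a ≠ 0 := by
  have h := tprod_one_add_ne_zero_of_summable
    (fun n => by rw [← sub_eq_add_neg, sub_ne_zero]; exact (hy n).symm)
    (summable_norm_neg_mul_pow ha y)
  unfold qPoch
  simpa only [← sub_eq_add_neg] using h

lemma qPoch_eq_one_sub_mul (ha : ‖a‖ < 1) (y : ℂ) :
    qPoch y a = (1 - y) * qPoch (y * a) a := by
  have hshift : (fun n : ℕ => 1 - y * a ^ (n + 1)) = fun n => 1 - y * a * a ^ n := by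
    ext n; ring
  unfold qPoch
  rw [tprod_eq_zero_mul' (by simpa only [hshift] using multipliable_one_sub_mul_pow ha (y * a)),
    hshift, pow_zero, mul_one]

lemma theta_eq_qPoch (ha : ‖a‖ < 1) {X Y : ℂ} (hY : Y = X⁻¹ * a) :
    theta a X = qPoch X a * qPoch Y a * qPoch a a := by
  have hmul := fun y => multipliable_one_sub_mul_pow ha y
  unfold theta qPoch
  rw [← (hmul X).tprod_mul (hmul Y), ← ((hmul X).mul (hmul Y)).tprod_mul (hmul a)]
  congr 1 with n
  rw [hY]; ring

lemma qPoch_self_ne_zero (ha : ‖a‖ < 1) : qPoch a a ≠ 0 :=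
  qPoch_ne_zero ha fun n h => by
    have hlt := pow_lt_one₀ (norm_nonneg a) ha n.succ_ne_zero
    rw [← norm_pow, pow_succ', h, norm_one] at hlt
    exact hlt.false

end QPochhammer

def pqLattice (p q : ℂ) : Set ℂ := {y | ∃ m n : ℤ, y = p ^ m * q ^ n}

section Lattice

variable {p q y z : ℂ}

lemma one_mem_pqLattice : 1 ∈ pqLattice p q := ⟨0, 0, by simp⟩

@[simp]
lemma left_mem_pqLattice : p ∈ pqLattice p q := ⟨1, 0, by simp⟩

@[simp]
lemma right_mem_pqLattice : q ∈ pqLattice p q := ⟨0, 1, by simp⟩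

@[simp]
lemma left_pow_mem_pqLattice (k : ℕ) : p ^ k ∈ pqLattice p q := ⟨k, 0, by simp⟩

@[simp]
lemma right_pow_mem_pqLattice (k : ℕ) : q ^ k ∈ pqLattice p q := ⟨0, k, by simp⟩

@[simp]
lemma inv_mem_pqLattice_iff : y⁻¹ ∈ pqLattice p q ↔ y ∈ pqLattice p q := by
  suffices ∀ y : ℂ, y ∈ pqLattice p q → y⁻¹ ∈ pqLattice p q from
    ⟨fun h => inv_inv y ▸ this _ h, this y⟩
  rintro _ ⟨m, n, rfl⟩
  exact ⟨-m, -n, by rw [mul_inv, zpow_neg, zpow_neg]⟩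

lemma mul_mem_pqLattice (hp : p ≠ 0) (hq : q ≠ 0) (hy : y ∈ pqLattice p q)
    (hz : z ∈ pqLattice p q) : y * z ∈ pqLattice p q := by
  obtain ⟨m, n, rfl⟩ := hy
  obtain ⟨m', n', rfl⟩ := hz
  exact ⟨m + m', n + n', by rw [zpow_add₀ hp, zpow_add₀ hq]; ring⟩

@[simp]
lemma mul_mem_pqLattice_iff (hp : p ≠ 0) (hq : q ≠ 0) (hz : z ∈ pqLattice p q) :
    y * z ∈ pqLattice p q ↔ y ∈ pqLattice p q := by
  refine ⟨fun h => ?_, fun h => mul_mem_pqLattice hp hq h hz⟩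
  have hz0 : z ≠ 0 := by
    obtain ⟨m, n, rfl⟩ := hz
    exact mul_ne_zero (zpow_ne_zero m hp) (zpow_ne_zero n hq)
  simpa [hz0] using mul_mem_pqLattice hp hq h (inv_mem_pqLattice_iff.2 hz)

@[simp]
lemma div_mem_pqLattice_iff (hp : p ≠ 0) (hq : q ≠ 0) (hz : z ∈ pqLattice p q) :
    y / z ∈ pqLattice p q ↔ y ∈ pqLattice p q := by
  rw [div_eq_mul_inv, mul_mem_pqLattice_iff hp hq (inv_mem_pqLattice_iff.2 hz)]

lemma ne_one_of_not_mem_pqLattice (hy : y ∉ pqLattice p q) : y ≠ 1 :=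
  fun h => hy (h ▸ one_mem_pqLattice)

lemma qPoch_ne_zero_of_not_mem_pqLattice (hp : p ≠ 0) (hq : q ≠ 0) (hp2 : ‖p ^ 2‖ < 1)
    (hy : y ∉ pqLattice p q) : qPoch y (p ^ 2) ≠ 0 := by
  refine qPoch_ne_zero hp2 fun n h => hy ?_
  rw [← pow_mul] at h
  exact (mul_mem_pqLattice_iff hp hq (left_pow_mem_pqLattice _)).1 (h ▸ one_mem_pqLattice)

end Lattice

theorem STT_eq_fDV_inv_div_fDV {p q x : ℂ} (hp : p ≠ 0) (hp2 : ‖p ^ 2‖ < 1) (hq : q ≠ 0)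
    (hx : x ≠ 0) (hxL : x ∉ pqLattice p q) : STT p q x = fDV p q x⁻¹ / fDV p q x := by
  have hθ (X Y : ℂ) (h : Y = X⁻¹ * p ^ 2) := theta_eq_qPoch hp2 h
  have peel (y z : ℂ) (h : y * p ^ 2 = z) : qPoch y (p ^ 2) = (1 - y) * qPoch z (p ^ 2) :=
    h ▸ qPoch_eq_one_sub_mul hp2 y
  have hP (y : ℂ) (h : y ∉ pqLattice p q) := qPoch_ne_zero_of_not_mem_pqLattice hp hq hp2 h
  rw [STT, fDV, fDV,
    hθ (x * p) (x⁻¹ * p) (by field_simp), hθ (x * q⁻¹) (x⁻¹ * p ^ 2 * q) (by field_simp),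
    hθ (x * p⁻¹ * q) (x⁻¹ * p ^ 3 * q⁻¹) (by field_simp),
    hθ (x * p⁻¹) (x⁻¹ * p ^ 3) (by field_simp),
    hθ (x * q) (x⁻¹ * p ^ 2 * q⁻¹) (by field_simp),
    hθ (x * p * q⁻¹) (x⁻¹ * p * q) (by field_simp),
    peel (x * p⁻¹) (x * p) (by field_simp), peel (x⁻¹ * p) (x⁻¹ * p ^ 3) (by ring),
    peel (x * q⁻¹) (x * p ^ 2 * q⁻¹) (by ring),
    peel (x⁻¹ * q) (x⁻¹ * p ^ 2 * q) (by ring),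
    peel (x * p⁻¹ * q) (x * p * q) (by field_simp),
    peel (x⁻¹ * p * q⁻¹) (x⁻¹ * p ^ 3 * q⁻¹) (by ring)]
  have := qPoch_self_ne_zero hp2
  have := hP (x * p) (by simp [hp, hq, hxL])
  have := hP (x⁻¹ * p ^ 3) (by simp [hp, hq, hxL])
  have := hP (x * q) (by simp [hp, hq, hxL])
  have := hP (x⁻¹ * p ^ 2 * q⁻¹) (by simp [hp, hq, hxL])
  have := hP (x * p * q⁻¹) (by simp [hp, hq, hxL])
  have := hP (x⁻¹ * p * q) (by simp [hp, hq, hxL])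
  have := hP (x * p * q) (by simp [hp, hq, hxL])
  have := hP (x * p ^ 2 * q⁻¹) (by simp [hp, hq, hxL])
  have hx1 := ne_one_of_not_mem_pqLattice hxL
  have hxp : x ≠ p := fun h => hxL (h ▸ left_mem_pqLattice)
  -- Freeze the `qPoch` values: `field_simp` would otherwise rewrite their arguments.
  generalize qPoch (p ^ 2) (p ^ 2) = A at *
  generalize qPoch (x * p) (p ^ 2) = B₁ at *
  generalize qPoch (x⁻¹ * p ^ 3) (p ^ 2) = B₂ at *
  generalize qPoch (x * q) (p ^ 2) = B₃ at *
  generalize qPoch (x⁻¹ * p ^ 2 * q⁻¹) (p ^ 2) = B₄ at *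
  generalize qPoch (x * p * q⁻¹) (p ^ 2) = B₅ at *
  generalize qPoch (x⁻¹ * p * q) (p ^ 2) = B₆ at *
  generalize qPoch (x * p * q) (p ^ 2) = B₇ at *
  generalize qPoch (x * p ^ 2 * q⁻¹) (p ^ 2) = B₈ at *
  field_simp
  ring

theorem F1_eq_fDV_mul_fDV {p q x : ℂ} (hp : p ≠ 0) (hp2 : ‖p ^ 2‖ < 1) (hq : q ≠ 0)
    (hxL : x ∉ pqLattice p q) : F1 p q x = fDV p q x * fDV p q (x * q) := by
  have hP (y : ℂ) (h : y ∉ pqLattice p q) := qPoch_ne_zero_of_not_mem_pqLattice hp hq hp2 h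
  rw [F1, fDV, fDV, qPoch_eq_one_sub_mul hp2 x, qPoch_eq_one_sub_mul hp2 (x * q),
    show x * q * q = x * q ^ 2 by ring, show x * q * p * q⁻¹ = x * p by field_simp,
    show x * q * p * q = x * p * q ^ 2 by ring,
    show x * q * p ^ 2 * q⁻¹ = x * p ^ 2 by field_simp,
    show x * q * p ^ 2 = x * p ^ 2 * q by ring]
  have := hP (x * p ^ 2) (by simp [hp, hq, hxL])
  have := hP (x * p * q) (by simp [hp, hq, hxL])
  have := hP (x * p ^ 2 * q⁻¹) (by simp [hp, hq, hxL])
  have := hP (x * p * q ^ 2) (by simp [hp, hq, hxL])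
  have := hP (x * p ^ 2 * q) (by simp [hp, hq, hxL])
  have hx1 := ne_one_of_not_mem_pqLattice hxL
  have hxq := ne_one_of_not_mem_pqLattice (show x * q ∉ pqLattice p q by simp [hp, hq, hxL])
  generalize qPoch (x * p ^ 2) (p ^ 2) = B₁ at *
  generalize qPoch (x * p * q) (p ^ 2) = B₂ at *
  generalize qPoch (x * p ^ 2 * q⁻¹) (p ^ 2) = B₃ at *
  generalize qPoch (x * p * q ^ 2) (p ^ 2) = B₄ at *
  generalize qPoch (x * p ^ 2 * q) (p ^ 2) = B₅ at *
  field_simp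

/-- Riemann factorization of the S-matrix function `S_{T₁,T₂^q}(x) = S_TT(x) S_TT(xq)`:
for `x ∉ L = pᶻqᶻ`, `S_TT(x) · S_TT(xq) = F₁(x)⁻¹ · F₁(x⁻¹q⁻¹)`. -/
theorem STT_T1_T2q_riemann_factorization
    (p q x : ℂ) (hp0 : 0 < ‖p‖) (hp1 : ‖p‖ < 1) (hq : q ≠ 0)
    (hx : x ≠ 0) (hxL : ¬ ∃ m n : ℤ, x = p ^ m * q ^ n) :
    STT p q x * STT p q (x * q) = (F1 p q x)⁻¹ * F1 p q (x⁻¹ * q⁻¹) := by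
  have hp : p ≠ 0 := norm_pos_iff.1 hp0
  have hp2 : ‖p ^ 2‖ < 1 := by
    rw [norm_pow]; exact pow_lt_one₀ (norm_nonneg p) hp1 two_ne_zero
  replace hxL : x ∉ pqLattice p q := hxL
  rw [STT_eq_fDV_inv_div_fDV hp hp2 hq hx hxL,
    STT_eq_fDV_inv_div_fDV hp hp2 hq (mul_ne_zero hx hq) (by simp [hp, hq, hxL]),
    F1_eq_fDV_mul_fDV hp hp2 hq hxL, F1_eq_fDV_mul_fDV hp hp2 hq (by simp [hp, hq, hxL]),
    inv_mul_cancel_right₀ hq, mul_inv]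
  ring
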